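/- arXiv:1711.07575 — 4 statements merged into one kernel-verified Lean document; each statement's English description precedes it below -/
import Mathlib

section
/- Let Y₁,…,Y_d be i.i.d. standard Gaussian random variables and let a₁,…,a_d be real numbers, not all zero. Set Z = ∑_{i=1}^d a_i(Y_i² − 1), ‖a‖₂ = (∑_{i=1}^d a_i²)^{1/2} and ‖a‖_∞ = max_{1≤i≤d}|a_i|. Then for every real x with 2‖a‖_∞|x| < 1, log E[exp(xZ)] ≤ ‖a‖₂² x² / (1 − 2‖a‖_∞|x|). -/
open MeasureTheory ProbabilityTheory Real Finset

/-!
Independence splits the cumulant generating function of `Z = ∑ aᵢ (Yᵢ² - 1)` into the sum of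
those of the summands. A Gaussian integral gives `E[exp (t (Y² - 1))] = e⁻ᵗ (1 - 2t)^(-1/2)` for
`t < 1/2`, so the `i`-th summand is `(-u - log (1 - u)) / 2` at `u = 2 aᵢ x`. Bounding the
power series `∑ₙ uⁿ⁺² / (n + 2)` termwise by `u² |u|ⁿ / 2` gives at most
`u² / (4 (1 - |u|)) ≤ aᵢ² x² / (1 - 2 ‖a‖∞ |x|)`.
-/

theorem Real.neg_sub_log_one_sub_le {u : ℝ} (hu : |u| < 1) :
    -u - log (1 - u) ≤ u ^ 2 / (2 * (1 - |u|)) := by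
  have htail : HasSum (fun n : ℕ => u ^ (n + 2) / (n + 2)) (-u - log (1 - u)) := by
    have h := (hasSum_nat_add_iff' 1).mpr (hasSum_pow_div_log_of_abs_lt_one hu)
    norm_num [sum_range_one, add_assoc] at h
    rwa [sub_eq_neg_add] at h
  have hgeom : HasSum (fun n : ℕ => u ^ 2 / 2 * |u| ^ n) (u ^ 2 / 2 * (1 - |u|)⁻¹) :=
    (hasSum_geometric_of_lt_one (abs_nonneg u) hu).mul_left _
  have hterm (n : ℕ) : u ^ (n + 2) / (n + 2) ≤ u ^ 2 / 2 * |u| ^ n :=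
    calc u ^ (n + 2) / (n + 2) ≤ |u| ^ (n + 2) / (n + 2) :=
          div_le_div_of_nonneg_right ((le_abs_self _).trans (abs_pow u _).le) (by positivity)
      _ ≤ |u| ^ (n + 2) / 2 := by gcongr; linarith [n.cast_nonneg (α := ℝ)]
      _ = u ^ 2 / 2 * |u| ^ n := by rw [pow_add, ← sq_abs u]; ring
  calc -u - log (1 - u) ≤ u ^ 2 / 2 * (1 - |u|)⁻¹ := hasSum_le hterm htail hgeom
    _ = u ^ 2 / (2 * (1 - |u|)) := by field_simp

theorem integral_exp_mul_sq_gaussianReal {t : ℝ} (ht : t < 1 / 2) :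
    ∫ y, exp (t * y ^ 2) ∂gaussianReal 0 1 = (√(1 - 2 * t))⁻¹ := by
  have hdensity (y : ℝ) : gaussianPDFReal 0 1 y • exp (t * y ^ 2)
      = (√(2 * π))⁻¹ * exp (-(1 / 2 - t) * y ^ 2) := by
    rw [gaussianPDFReal, smul_eq_mul, mul_assoc, ← exp_add]
    congr 2
    · simp
    · push_cast; ring
  simp_rw [integral_gaussianReal_eq_integral_smul one_ne_zero, hdensity]
  rw [integral_const_mul, integral_gaussian,
    show π / (1 / 2 - t) = 2 * π / (1 - 2 * t) by field_simp, sqrt_div' _ (by linarith),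
    div_eq_mul_inv, ← mul_assoc, inv_mul_cancel₀ (by positivity), one_mul]

theorem ProbabilityTheory.hasLaw_of_map_eq {Ω 𝓧 : Type*} [MeasurableSpace Ω] [MeasurableSpace 𝓧]
    {P : Measure Ω} {X : Ω → 𝓧} {μ : Measure 𝓧} [NeZero μ] (h : P.map X = μ) : HasLaw X μ P :=
  ⟨.of_map_ne_zero (h ▸ NeZero.ne μ), h⟩

section CenteredChiSquared

variable {Ω : Type*} [MeasurableSpace Ω] {P : Measure Ω} {Y : Ω → ℝ} {t : ℝ}

theorem mgf_sq_sub_one_of_hasLaw_gaussianReal (hY : HasLaw Y (gaussianReal 0 1) P)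
    (ht : t < 1 / 2) :
    mgf (fun ω => Y ω ^ 2 - 1) P t = exp (-t) * (√(1 - 2 * t))⁻¹ := by
  have hsplit (y : ℝ) : exp (t * (y ^ 2 - 1)) = exp (-t) * exp (t * y ^ 2) := by
    rw [← exp_add]; ring_nf
  calc mgf (fun ω => Y ω ^ 2 - 1) P t = ∫ y, exp (t * (y ^ 2 - 1)) ∂gaussianReal 0 1 :=
        hY.integral_comp (f := fun y => exp (t * (y ^ 2 - 1))) (by fun_prop)
    _ = exp (-t) * (√(1 - 2 * t))⁻¹ := by
        simp_rw [hsplit]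
        rw [integral_const_mul, integral_exp_mul_sq_gaussianReal ht]

theorem integrable_exp_mul_sq_sub_one_of_hasLaw_gaussianReal
    (hY : HasLaw Y (gaussianReal 0 1) P) (ht : t < 1 / 2) :
    Integrable (fun ω => exp (t * (Y ω ^ 2 - 1))) P := by
  refine .of_integral_ne_zero (ne_of_gt ?_)
  change 0 < mgf (fun ω => Y ω ^ 2 - 1) P t
  rw [mgf_sq_sub_one_of_hasLaw_gaussianReal hY ht]
  have : 0 < 1 - 2 * t := by linarith
  positivity

theorem cgf_sq_sub_one_le_of_hasLaw_gaussianReal (hY : HasLaw Y (gaussianReal 0 1) P)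
    (ht : 2 * |t| < 1) : cgf (fun ω => Y ω ^ 2 - 1) P t ≤ t ^ 2 / (1 - 2 * |t|) := by
  have h2t : |2 * t| < 1 := by rwa [abs_mul, abs_two]
  have hpos : 0 < 1 - 2 * t := by linarith [le_abs_self (2 * t)]
  have hcgf : cgf (fun ω => Y ω ^ 2 - 1) P t = (-(2 * t) - log (1 - 2 * t)) / 2 := by
    rw [cgf, mgf_sq_sub_one_of_hasLaw_gaussianReal hY (by linarith), log_mul (by positivity)
      (by positivity), log_exp, log_inv, log_sqrt hpos.le]
    ring
  have hden : 1 - 2 * |t| ≠ 0 := by linarith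
  calc cgf (fun ω => Y ω ^ 2 - 1) P t ≤ (2 * t) ^ 2 / (2 * (1 - |2 * t|)) / 2 := by
        rw [hcgf]; gcongr; exact neg_sub_log_one_sub_le h2t
    _ = t ^ 2 / (1 - 2 * |t|) := by rw [abs_mul, abs_two]; field_simp

end CenteredChiSquared

theorem gaussian_quadratic_logMgf_bound_general
    {Ω : Type*} [MeasurableSpace Ω] (μ : Measure Ω)
    {d : ℕ} (Y : Fin d → Ω → ℝ)
    (hindep : iIndepFun Y μ)
    (hdist : ∀ i, μ.map (Y i) = gaussianReal 0 1)
    (a : Fin d → ℝ)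
    (x : ℝ) (hx : 2 * (⨆ i, |a i|) * |x| < 1) :
    Real.log (∫ ω, Real.exp (x * ∑ i, a i * ((Y i ω) ^ 2 - 1)) ∂μ)
      ≤ (∑ i, (a i) ^ 2) * x ^ 2 / (1 - 2 * (⨆ i, |a i|) * |x|) := by
  have hlaw (i : Fin d) : HasLaw (Y i) (gaussianReal 0 1) μ := hasLaw_of_map_eq (hdist i)
  have hc (i : Fin d) : 2 * |a i * x| ≤ 2 * (⨆ i, |a i|) * |x| := by
    have := le_ciSup (Set.finite_range fun j => |a j|).bddAbove i
    rw [abs_mul, ← mul_assoc]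
    gcongr
  set X : Fin d → Ω → ℝ := fun i ω => a i * (Y i ω ^ 2 - 1)
  have hXindep : iIndepFun X μ := hindep.comp (fun i y => a i * (y ^ 2 - 1)) (by fun_prop)
  have hXint (i : Fin d) : Integrable (fun ω => exp (x * X i ω)) μ := by
    simpa only [X, mul_left_comm x, ← mul_assoc] using
      integrable_exp_mul_sq_sub_one_of_hasLaw_gaussianReal (hlaw i) (t := a i * x)
        (by linarith [hc i, le_abs_self (a i * x)])
  calc log (∫ ω, exp (x * ∑ i, a i * (Y i ω ^ 2 - 1)) ∂μ) = cgf (∑ i, X i) μ x := by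
        simp only [cgf, mgf, Finset.sum_apply, X]
    _ = ∑ i, cgf (fun ω => Y i ω ^ 2 - 1) μ (a i * x) := by
        rw [hXindep.cgf_sum₀ (fun i => by fun_prop) fun i _ => hXint i]
        simp only [cgf, X, mgf_const_mul]
    _ ≤ ∑ i, (a i * x) ^ 2 / (1 - 2 * |a i * x|) :=
        sum_le_sum fun i _ => cgf_sq_sub_one_le_of_hasLaw_gaussianReal (hlaw i) ((hc i).trans_lt hx)
    _ ≤ ∑ i, (a i * x) ^ 2 / (1 - 2 * (⨆ i, |a i|) * |x|) := by
        refine sum_le_sum fun i _ => div_le_div_of_nonneg_left (sq_nonneg _) (by linarith) ?_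
        linarith [hc i]
    _ = (∑ i, a i ^ 2) * x ^ 2 / (1 - 2 * (⨆ i, |a i|) * |x|) := by
        simp only [mul_pow, sum_mul, sum_div]

/-- Log-MGF bound for `Z = ∑ i, a i * (Y i ^ 2 - 1)` with `Y i` i.i.d.
standard Gaussian and `a ≠ 0`: for every `x` with `2‖a‖∞|x| < 1`,
`log E[exp (x Z)] ≤ ‖a‖₂² x² / (1 - 2‖a‖∞|x|)`. -/
theorem gaussian_quadratic_logMgf_bound
    {Ω : Type*} [MeasurableSpace Ω] (μ : Measure Ω) [IsProbabilityMeasure μ]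
    {d : ℕ} (Y : Fin d → Ω → ℝ) (hmeas : ∀ i, Measurable (Y i))
    (hindep : iIndepFun Y μ)
    (hdist : ∀ i, μ.map (Y i) = gaussianReal 0 1)
    (a : Fin d → ℝ) (ha : a ≠ 0)
    (x : ℝ) (hx : 2 * (⨆ i, |a i|) * |x| < 1) :
    Real.log (∫ ω, Real.exp (x * ∑ i, a i * ((Y i ω) ^ 2 - 1)) ∂μ)
      ≤ (∑ i, (a i) ^ 2) * x ^ 2 / (1 - 2 * (⨆ i, |a i|) * |x|) :=
  gaussian_quadratic_logMgf_bound_general μ Y hindep hdist a x hx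
end

section
/- Let Y₁,…,Y_m be i.i.d. standard Gaussian random variables, let X = ∑_{i=1}^m Y_i², and define the normalized statistic L = (X − m)/√m. Then for every t ≥ 0, P(L > 2t + 2t²/√m) ≤ exp(−t²). -/
/-!
A Chernoff bound. The square of a standard Gaussian has moment generating function
`(1 - 2c)^(-1/2)`, so for `X ~ χ²_m` and `a ≥ 0`, the exponent `c = a / (2 (m + a))` gives
`P(X ≥ m + a) ≤ exp(-a/2) (1 + a/m)^(m/2)`. With `a = 2√m t + 2t²` one has
`1 + a/m = 1 + x + x²/2 ≤ exp x` for `x = 2t/√m`, so the bound is at most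
`exp(-√m t - t²) exp(√m t) = exp(-t²)`.
-/

open MeasureTheory ProbabilityTheory Real

lemma gaussianPDFReal_zero_one_mul_exp_mul_sq (c x : ℝ) :
    gaussianPDFReal 0 1 x * exp (c * x ^ 2) = (√(2 * π))⁻¹ * exp (-(1 / 2 - c) * x ^ 2) := by
  rw [gaussianPDFReal, mul_assoc, ← exp_add]
  push_cast
  ring_nf

-- Both sides vanish when `1 / 2 ≤ c`.
lemma mgf_sq_gaussianReal (c : ℝ) :
    mgf (fun x ↦ x ^ 2) (gaussianReal 0 1) c = (√(1 - 2 * c))⁻¹ := by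
  rw [mgf, integral_gaussianReal_eq_integral_smul one_ne_zero]
  simp only [smul_eq_mul, gaussianPDFReal_zero_one_mul_exp_mul_sq, integral_const_mul,
    integral_gaussian]
  rw [← sqrt_inv, ← sqrt_mul (by positivity), ← sqrt_inv]
  congr 1
  field_simp

lemma integrable_exp_mul_sq_gaussianReal {c : ℝ} (hc : c < 1 / 2) :
    Integrable (fun x ↦ exp (c * x ^ 2)) (gaussianReal 0 1) := by
  have hpos : 0 < 1 - 2 * c := by linarith
  exact mgf_pos_iff.1 (by rw [mgf_sq_gaussianReal]; positivity)

section SumOfSquares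

variable {Ω ι : Type*} [MeasurableSpace Ω] {μ : Measure Ω} {Y : ι → Ω → ℝ}

lemma integrable_exp_mul_sq_of_map_eq_gaussianReal {Z : Ω → ℝ} (hZ : Measurable Z)
    (hlaw : μ.map Z = gaussianReal 0 1) {c : ℝ} (hc : c < 1 / 2) :
    Integrable (fun ω ↦ exp (c * Z ω ^ 2)) μ := by
  have h := integrable_exp_mul_sq_gaussianReal hc
  rw [← hlaw, integrable_map_measure (by fun_prop) hZ.aemeasurable] at h
  exact h

lemma mgf_sq_of_map_eq_gaussianReal {Z : Ω → ℝ} (hZ : Measurable Z)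
    (hlaw : μ.map Z = gaussianReal 0 1) (c : ℝ) :
    mgf (fun ω ↦ Z ω ^ 2) μ c = (√(1 - 2 * c))⁻¹ := by
  rw [← mgf_sq_gaussianReal, ← hlaw, mgf_map hZ.aemeasurable (by fun_prop)]
  rfl

-- Chernoff bound at the optimal exponent `c = a / (2 (n + a))`.
lemma measureReal_add_le_sum_sq_le [Fintype ι] [Nonempty ι] (hmeas : ∀ i, Measurable (Y i))
    (hindep : iIndepFun Y μ) (hlaw : ∀ i, μ.map (Y i) = gaussianReal 0 1) {a : ℝ} (ha : 0 ≤ a) :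
    μ.real {ω | Fintype.card ι + a ≤ ∑ i, Y i ω ^ 2}
      ≤ exp (-(a / 2)) * √(1 + a / Fintype.card ι) ^ Fintype.card ι := by
  have := hindep.isProbabilityMeasure
  set n : ℝ := (Fintype.card ι : ℝ)
  have hn : 0 < n := by positivity
  set c := a / (2 * (n + a)) with hc_def
  have hc0 : 0 ≤ c := by positivity
  have hc : c < 1 / 2 := by rw [div_lt_iff₀ (by positivity)]; linarith
  have hc_mul : c * (n + a) = a / 2 := by rw [hc_def]; field_simp
  have hone_sub : 1 - 2 * c = (1 + a / n)⁻¹ := by rw [hc_def]; field_simp; ring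
  have hsq : iIndepFun (fun i ω ↦ Y i ω ^ 2) μ := hindep.comp (fun _ x ↦ x ^ 2) (by fun_prop)
  have hint : Integrable (fun ω ↦ exp (c * (∑ i, fun ω ↦ Y i ω ^ 2) ω)) μ :=
    hsq.integrable_exp_mul_sum (by fun_prop)
      fun i _ ↦ integrable_exp_mul_sq_of_map_eq_gaussianReal (hmeas i) (hlaw i) hc
  have hchernoff := measure_ge_le_exp_mul_mgf (n + a) hc0 hint
  simp only [hsq.mgf_sum (by fun_prop), mgf_sq_of_map_eq_gaussianReal (hmeas _) (hlaw _),
    Finset.prod_const, Finset.card_univ, Finset.sum_apply] at hchernoff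
  rwa [neg_mul, hc_mul, hone_sub, sqrt_inv, inv_inv] at hchernoff

end SumOfSquares

lemma exp_neg_half_mul_sqrt_one_add_pow_le {m : ℕ} (hm : 0 < m) {t : ℝ} (ht : 0 ≤ t) :
    exp (-((2 * √m * t + 2 * t ^ 2) / 2)) * √(1 + (2 * √m * t + 2 * t ^ 2) / m) ^ m
      ≤ exp (-t ^ 2) := by
  set s := √(m : ℝ)
  have hs : 0 < s := by positivity
  have hs_sq : s ^ 2 = m := sq_sqrt (Nat.cast_nonneg m)
  have hbase : 1 + (2 * s * t + 2 * t ^ 2) / m = 1 + 2 * t / s + (2 * t / s) ^ 2 / 2 := by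
    rw [← hs_sq]; field_simp; ring
  have hsqrt : √(1 + (2 * s * t + 2 * t ^ 2) / m) ≤ exp (t / s) := by
    rw [sqrt_le_iff, ← exp_nat_mul, hbase]
    refine ⟨(exp_pos _).le, ?_⟩
    convert quadratic_le_exp_of_nonneg (by positivity : 0 ≤ 2 * t / s) using 2
    push_cast; ring
  have hpow : exp (t / s) ^ m = exp (s * t) := by
    rw [← exp_nat_mul, ← hs_sq]; field_simp
  calc exp (-((2 * s * t + 2 * t ^ 2) / 2)) * √(1 + (2 * s * t + 2 * t ^ 2) / m) ^ m
      ≤ exp (-((2 * s * t + 2 * t ^ 2) / 2)) * exp (t / s) ^ m := by gcongr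
    _ = exp (-t ^ 2) := by rw [hpow, ← exp_add]; ring_nf

/-- Tail bound for the normalized chi-squared statistic: if
`X = ∑ i, Y i ^ 2` with `Y i` i.i.d. `N(0,1)` and `L = (X - m)/√m`, then for every `t ≥ 0`,
`P(L > 2t + 2t²/√m) ≤ exp (-t²)`. -/
theorem chisq_normalized_tail
    {Ω : Type*} [MeasurableSpace Ω] (μ : Measure Ω) [IsProbabilityMeasure μ]
    {m : ℕ} (Y : Fin m → Ω → ℝ) (hmeas : ∀ i, Measurable (Y i))
    (hindep : iIndepFun Y μ)
    (hdist : ∀ i, μ.map (Y i) = gaussianReal 0 1)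
    (t : ℝ) (ht : 0 ≤ t) :
    μ {ω | 2 * t + 2 * t ^ 2 / Real.sqrt m
        < ((∑ i, (Y i ω) ^ 2) - m) / Real.sqrt m}
      ≤ ENNReal.ofReal (Real.exp (-t ^ 2)) := by
  rcases Nat.eq_zero_or_pos m with rfl | hm
  · simp [not_lt.2 (by positivity : 0 ≤ 2 * t)]
  have : Nonempty (Fin m) := ⟨⟨0, hm⟩⟩
  have hs : 0 < √(m : ℝ) := by positivity
  have hsub : {ω | 2 * t + 2 * t ^ 2 / √m < ((∑ i, Y i ω ^ 2) - m) / √m}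
      ⊆ {ω | Fintype.card (Fin m) + (2 * √m * t + 2 * t ^ 2) ≤ ∑ i, Y i ω ^ 2} := by
    intro ω hω
    simp only [Set.mem_ofPred_eq, lt_div_iff₀ hs, Fintype.card_fin] at hω ⊢
    have : (2 * t + 2 * t ^ 2 / √m) * √m = 2 * √m * t + 2 * t ^ 2 := by field_simp
    linarith
  have hbound := (measureReal_add_le_sum_sq_le hmeas hindep hdist
    (a := 2 * √m * t + 2 * t ^ 2) (by positivity)).trans
    (by simpa only [Fintype.card_fin] using exp_neg_half_mul_sqrt_one_add_pow_le hm ht)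
  calc μ _ ≤ μ _ := measure_mono hsub
    _ = ENNReal.ofReal (μ.real _) := (ofReal_measureReal).symm
    _ ≤ ENNReal.ofReal (exp (-t ^ 2)) := ENNReal.ofReal_le_ofReal hbound
end

section
/- Let (Y_i)_{i∈ι} be i.i.d. standard Gaussian random variables indexed by a finite set ι, and for a nonempty subset R ⊆ ι define the normalized region statistic L_R = (∑_{i∈R}(Y_i² − 1))/√|R|. For nonempty subsets R₁, R₂ ⊆ ι define the distance d(R₁,R₂) = 1 − |R₁∩R₂|/√(|R₁||R₂|). Then for every t ≥ 0, P(|L_{R₁} − L_{R₂}| > 2√(2 d(R₁,R₂)) t + 2t²/√(min(|R₁|,|R₂|))) ≤ 2 exp(−t²). -/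
/-!
Write `L_{R₁} - L_{R₂} = ∑ᵢ aᵢ (Yᵢ² - 1)` with `a = 𝟙_{R₁}/√|R₁| - 𝟙_{R₂}/√|R₂|`, so that
`∑ᵢ aᵢ² = 2 d(R₁, R₂)` and `|aᵢ| ≤ M := 1/√(min |R₁| |R₂|)`. The centred chi-square variable
`Y² - 1` has moment generating function `e^{-s}/√(1 - 2s) ≤ exp (s²/(1 - 2|s|))`, so by
independence the weighted sum is sub-gamma: its mgf at `0 ≤ λ < 1/(2M)` is at most
`exp (λ² ∑ aᵢ² / (1 - 2λM))`. Chernoff's bound at `λ = t/(√v + 2Mt)` turns this into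
`P(∑ aᵢ (Yᵢ² - 1) ≥ 2√v t + 2Mt²) ≤ e^{-t²}`, and the same for `-a` gives the other tail.
-/

open MeasureTheory ProbabilityTheory Real Finset

lemma neg_log_one_sub_sub_le {x : ℝ} (hx : |x| < 1) :
    -log (1 - x) - x ≤ x ^ 2 / (2 * (1 - |x|)) := by
  -- compare `∑_{n ≥ 2} xⁿ/n` termwise with `∑_{n ≥ 2} |x|ⁿ/2`
  have hlog : HasSum (fun n : ℕ => x ^ (n + 2) / (n + 2)) (-log (1 - x) - x) := by
    have h := (hasSum_nat_add_iff' 1).mpr (hasSum_pow_div_log_of_abs_lt_one hx)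
    rw [show (fun n : ℕ => x ^ (n + 2) / (n + 2))
        = fun n : ℕ => x ^ (n + 1 + 1) / (((n + 1 : ℕ) : ℝ) + 1) by funext n; push_cast; ring]
    simpa using h
  have hgeom : HasSum (fun n : ℕ => |x| ^ 2 / 2 * |x| ^ n) (x ^ 2 / (2 * (1 - |x|))) := by
    rw [show x ^ 2 / (2 * (1 - |x|)) = |x| ^ 2 / 2 * (1 - |x|)⁻¹ by
      have : 1 - |x| ≠ 0 := (sub_pos.mpr hx).ne'
      rw [sq_abs]; field_simp]
    exact (hasSum_geometric_of_abs_lt_one (by rwa [abs_abs])).mul_left _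
  refine hasSum_le (fun n => ?_) hlog hgeom
  calc x ^ (n + 2) / (n + 2) ≤ |x| ^ (n + 2) / (n + 2) := by
        gcongr ?_ / _; exact (le_abs_self _).trans_eq (abs_pow x _)
    _ ≤ |x| ^ (n + 2) / 2 := by gcongr; linarith [n.cast_nonneg (α := ℝ)]
    _ = |x| ^ 2 / 2 * |x| ^ n := by ring

lemma mgf_sq_sub_one_gaussianReal {s : ℝ} (hs : s < 1 / 2) :
    mgf (fun x => x ^ 2 - 1) (gaussianReal 0 1) s = exp (-s) / √(1 - 2 * s) := by
  have hpdf : ∀ x, gaussianPDFReal 0 1 x • exp (s * (x ^ 2 - 1))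
      = (√(2 * π))⁻¹ * exp (-s) * exp (-(1 / 2 - s) * x ^ 2) := fun x => by
    simp only [gaussianPDFReal, NNReal.coe_one, mul_one, sub_zero, smul_eq_mul, mul_assoc,
      ← exp_add]
    ring_nf
  rw [mgf, integral_gaussianReal_eq_integral_smul one_ne_zero]
  simp_rw [hpdf]
  rw [integral_const_mul, integral_gaussian, show 1 - 2 * s = 2 * (1 / 2 - s) by ring,
    sqrt_div' _ (by linarith), sqrt_mul' _ pi_pos.le, sqrt_mul zero_le_two]
  have : 0 < √(1 / 2 - s) := sqrt_pos.mpr (by linarith)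
  field_simp

lemma integrable_exp_mul_sq_sub_one_gaussianReal {s : ℝ} (hs : s < 1 / 2) :
    Integrable (fun x => exp (s * (x ^ 2 - 1))) (gaussianReal 0 1) :=
  .of_integral_ne_zero <| by
    rw [← mgf, mgf_sq_sub_one_gaussianReal hs]
    exact (div_pos (exp_pos _) (sqrt_pos.mpr (by linarith))).ne'

lemma mgf_sq_sub_one_gaussianReal_le {s : ℝ} (hs : |s| < 1 / 2) :
    mgf (fun x => x ^ 2 - 1) (gaussianReal 0 1) s ≤ exp (s ^ 2 / (1 - 2 * |s|)) := by
  have hs' : s < 1 / 2 := (le_abs_self s).trans_lt hs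
  have hpos : 0 < 1 - 2 * s := by linarith
  have hlog := neg_log_one_sub_sub_le (x := 2 * s) (by rw [abs_mul, abs_two]; linarith)
  rw [mgf_sq_sub_one_gaussianReal hs', sqrt_eq_rpow, ← exp_log hpos, ← exp_mul, ← exp_sub,
    exp_le_exp]
  rw [abs_mul, abs_two] at hlog
  calc -s - log (1 - 2 * s) * (1 / 2) = (-log (1 - 2 * s) - 2 * s) / 2 := by ring
    _ ≤ (2 * s) ^ 2 / (2 * (1 - 2 * |s|)) / 2 := by gcongr
    _ = s ^ 2 / (1 - 2 * |s|) := by field_simp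

section StandardGaussian

variable {Ω : Type*} [MeasurableSpace Ω] {μ : Measure Ω} {Y : Ω → ℝ} {s : ℝ}

lemma integrable_exp_mul_sq_sub_one (hY : Measurable Y) (hμY : μ.map Y = gaussianReal 0 1)
    (hs : s < 1 / 2) : Integrable (fun ω => exp (s * (Y ω ^ 2 - 1))) μ := by
  have h := integrable_exp_mul_sq_sub_one_gaussianReal hs
  rw [← hμY] at h
  exact (integrable_map_measure h.aestronglyMeasurable hY.aemeasurable).mp h

lemma mgf_sq_sub_one_le (hY : Measurable Y) (hμY : μ.map Y = gaussianReal 0 1)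
    (hs : |s| < 1 / 2) : mgf (fun ω => Y ω ^ 2 - 1) μ s ≤ exp (s ^ 2 / (1 - 2 * |s|)) := by
  have hs' : s < 1 / 2 := (le_abs_self s).trans_lt hs
  rw [← Function.comp_def (fun x => x ^ 2 - 1), ← mgf_map hY.aemeasurable, hμY]
  · exact mgf_sq_sub_one_gaussianReal_le hs
  · rw [hμY]; exact (integrable_exp_mul_sq_sub_one_gaussianReal hs').aestronglyMeasurable

end StandardGaussian

section SubGamma

variable {Ω : Type*} [MeasurableSpace Ω] {μ : Measure Ω}

lemma measureReal_ge_le_exp_neg_sq_of_mgf_le [IsFiniteMeasure μ] {S : Ω → ℝ} {v M t : ℝ}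
    (hv : 0 < v) (hM : 0 ≤ M) (ht : 0 ≤ t)
    (hS : ∀ l, 0 ≤ l → l * M < 1 / 2 →
      Integrable (fun ω => exp (l * S ω)) μ ∧ mgf S μ l ≤ exp (l ^ 2 * v / (1 - 2 * l * M))) :
    μ.real {ω | 2 * √v * t + 2 * M * t ^ 2 ≤ S ω} ≤ exp (-t ^ 2) := by
  obtain ⟨w, hw, rfl⟩ : ∃ w, 0 < w ∧ v = w ^ 2 := ⟨√v, sqrt_pos.mpr hv, (sq_sqrt hv.le).symm⟩
  rw [sqrt_sq hw.le]
  have hD : 0 < w + 2 * M * t := by positivity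
  -- the minimiser of the Chernoff exponent `-l (2wt + 2Mt²) + l²w²/(1 - 2lM)`
  set l := t / (w + 2 * M * t) with hl
  have hlM : l * M < 1 / 2 := by
    rw [div_mul_eq_mul_div, div_lt_iff₀ hD]; nlinarith
  have hl₁ : 1 - 2 * l * M = w / (w + 2 * M * t) := by rw [hl]; field_simp; ring
  obtain ⟨hint, hmgf⟩ := hS l (by positivity) hlM
  calc μ.real _ ≤ exp (-l * (2 * w * t + 2 * M * t ^ 2)) * mgf S μ l :=
        measure_ge_le_exp_mul_mgf _ (by positivity) hint
    _ ≤ exp (-l * (2 * w * t + 2 * M * t ^ 2)) * exp (l ^ 2 * w ^ 2 / (1 - 2 * l * M)) := by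
        gcongr
    _ = exp (-t ^ 2) := by
        rw [← exp_add, hl₁, hl]
        congr 1
        field_simp
        ring

end SubGamma

section WeightedChiSquare

variable {ι : Type*} [Fintype ι] {Ω : Type*} [MeasurableSpace Ω] {μ : Measure Ω}
  {Y : ι → Ω → ℝ}

lemma mgf_sum_mul_sq_sub_one_le (hmeas : ∀ i, Measurable (Y i)) (hindep : iIndepFun Y μ)
    (hdist : ∀ i, μ.map (Y i) = gaussianReal 0 1) {a : ι → ℝ} {M l : ℝ} (hM : ∀ i, |a i| ≤ M)
    (hl : 0 ≤ l) (hlM : l * M < 1 / 2) :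
    Integrable (fun ω => exp (l * ∑ i, a i * (Y i ω ^ 2 - 1))) μ ∧
      mgf (fun ω => ∑ i, a i * (Y i ω ^ 2 - 1)) μ l
        ≤ exp (l ^ 2 * (∑ i, a i ^ 2) / (1 - 2 * l * M)) := by
  have := hindep.isProbabilityMeasure
  set X : ι → Ω → ℝ := fun i ω => a i * (Y i ω ^ 2 - 1)
  have hXmeas : ∀ i, Measurable (X i) := fun i => by fun_prop
  have hXindep : iIndepFun X μ :=
    hindep.comp (fun i x => a i * (x ^ 2 - 1)) (fun i => by fun_prop)
  have hsum : (fun ω => ∑ i, X i ω) = ∑ i, X i := by ext ω; simp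
  have hsmall : ∀ i, |a i * l| ≤ l * M := fun i => by
    rw [abs_mul, abs_of_nonneg hl, mul_comm]; exact mul_le_mul_of_nonneg_left (hM i) hl
  have hint : ∀ i, Integrable (fun ω => exp (l * X i ω)) μ := fun i => by
    simpa [X, mul_assoc, mul_comm l] using integrable_exp_mul_sq_sub_one (hmeas i) (hdist i)
      ((le_abs_self _).trans_lt ((hsmall i).trans_lt hlM))
  refine ⟨by simpa [hsum] using hXindep.integrable_exp_mul_sum hXmeas (fun i _ => hint i), ?_⟩
  rw [hsum, hXindep.mgf_sum hXmeas, mul_sum, sum_div, exp_sum]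
  refine prod_le_prod (fun i _ => mgf_nonneg) fun i _ => ?_
  rw [mgf_const_mul]
  calc mgf (fun ω => Y i ω ^ 2 - 1) μ (a i * l)
      ≤ exp ((a i * l) ^ 2 / (1 - 2 * |a i * l|)) :=
        mgf_sq_sub_one_le (hmeas i) (hdist i) ((hsmall i).trans_lt hlM)
    _ ≤ exp (l ^ 2 * a i ^ 2 / (1 - 2 * l * M)) := by
        rw [exp_le_exp, mul_pow, mul_comm]
        exact div_le_div_of_nonneg_left (by positivity) (by linarith) (by linarith [hsmall i])

lemma measureReal_ge_sum_mul_sq_sub_one_le (hmeas : ∀ i, Measurable (Y i))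
    (hindep : iIndepFun Y μ) (hdist : ∀ i, μ.map (Y i) = gaussianReal 0 1) {a : ι → ℝ}
    {M t : ℝ} (hv : 0 < ∑ i, a i ^ 2) (hM₀ : 0 ≤ M) (hM : ∀ i, |a i| ≤ M) (ht : 0 ≤ t) :
    μ.real {ω | 2 * √(∑ i, a i ^ 2) * t + 2 * M * t ^ 2 ≤ ∑ i, a i * (Y i ω ^ 2 - 1)}
      ≤ exp (-t ^ 2) :=
  have := hindep.isProbabilityMeasure
  measureReal_ge_le_exp_neg_sq_of_mgf_le hv hM₀ ht fun _ hl hlM =>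
    mgf_sum_mul_sq_sub_one_le hmeas hindep hdist hM hl hlM

lemma measure_lt_abs_sum_mul_sq_sub_one_le (hmeas : ∀ i, Measurable (Y i))
    (hindep : iIndepFun Y μ) (hdist : ∀ i, μ.map (Y i) = gaussianReal 0 1) (a : ι → ℝ)
    {M t : ℝ} (hM₀ : 0 ≤ M) (hM : ∀ i, |a i| ≤ M) (ht : 0 ≤ t) :
    μ {ω | 2 * √(∑ i, a i ^ 2) * t + 2 * M * t ^ 2 < |∑ i, a i * (Y i ω ^ 2 - 1)|}
      ≤ ENNReal.ofReal (2 * exp (-t ^ 2)) := by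
  have := hindep.isProbabilityMeasure
  rcases (sum_nonneg fun i _ => sq_nonneg (a i)).eq_or_lt with hv | hv
  · have ha : ∀ i, a i = 0 := fun i => by
      simpa using (sum_eq_zero_iff_of_nonneg fun i _ => sq_nonneg (a i)).mp hv.symm i (mem_univ i)
    have hthreshold : ¬2 * M * t ^ 2 < 0 := not_lt.mpr (by positivity)
    simp [ha, hthreshold]
  have hneg : ∀ ω, ∑ i, -a i * (Y i ω ^ 2 - 1) = -∑ i, a i * (Y i ω ^ 2 - 1) := fun ω => by
    simp [neg_mul]
  have hupper := measureReal_ge_sum_mul_sq_sub_one_le hmeas hindep hdist hv hM₀ hM ht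
  have hlower := measureReal_ge_sum_mul_sq_sub_one_le (a := fun i => -a i) hmeas hindep hdist
    (by simpa using hv) hM₀ (by simpa using hM) ht
  simp only [neg_sq, hneg, le_neg] at hlower
  set θ := 2 * √(∑ i, a i ^ 2) * t + 2 * M * t ^ 2
  set S := fun ω => ∑ i, a i * (Y i ω ^ 2 - 1)
  calc μ {ω | θ < |S ω|} ≤ μ ({ω | θ ≤ S ω} ∪ {ω | S ω ≤ -θ}) :=
        measure_mono fun ω (hω : θ < |S ω|) =>
          (lt_abs.mp hω).imp le_of_lt fun h => show S ω ≤ -θ by linarith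
    _ ≤ μ {ω | θ ≤ S ω} + μ {ω | S ω ≤ -θ} := measure_union_le _ _
    _ ≤ ENNReal.ofReal (exp (-t ^ 2)) + ENNReal.ofReal (exp (-t ^ 2)) := by
        rw [← ofReal_measureReal, ← ofReal_measureReal]
        gcongr
    _ = ENNReal.ofReal (2 * exp (-t ^ 2)) := by
        rw [← ENNReal.ofReal_add (exp_nonneg _) (exp_nonneg _), two_mul]

end WeightedChiSquare

section RegionWeight

variable {ι : Type*} [DecidableEq ι]

noncomputable def regionWeight (R : Finset ι) (i : ι) : ℝ := if i ∈ R then (√(#R : ℝ))⁻¹ else 0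

lemma regionWeight_nonneg (R : Finset ι) (i : ι) : 0 ≤ regionWeight R i := by
  unfold regionWeight; split_ifs <;> positivity

lemma regionWeight_le {R : Finset ι} {m : ℝ} (hm : 0 < m) (hmR : m ≤ #R) (i : ι) :
    regionWeight R i ≤ (√m)⁻¹ := by
  unfold regionWeight
  split_ifs
  · gcongr
  · positivity

lemma abs_sub_regionWeight_le {R₁ R₂ : Finset ι} (h₁ : R₁.Nonempty) (h₂ : R₂.Nonempty) (i : ι) :
    |regionWeight R₁ i - regionWeight R₂ i| ≤ (√(min (#R₁ : ℝ) #R₂))⁻¹ := by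
  have hmin : 0 < min (#R₁ : ℝ) #R₂ :=
    lt_min (Nat.cast_pos.mpr h₁.card_pos) (Nat.cast_pos.mpr h₂.card_pos)
  exact abs_sub_le_of_nonneg_of_le (regionWeight_nonneg _ _)
    (regionWeight_le hmin (min_le_left _ _) i) (regionWeight_nonneg _ _)
    (regionWeight_le hmin (min_le_right _ _) i)

variable [Fintype ι]

lemma sum_regionWeight_mul (R : Finset ι) (f : ι → ℝ) :
    ∑ i, regionWeight R i * f i = (∑ i ∈ R, f i) / √(#R : ℝ) := by
  simp only [regionWeight, ite_mul, zero_mul, sum_ite_mem, univ_inter, ← mul_sum, div_eq_inv_mul]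

lemma sum_regionWeight_mul_regionWeight (R₁ R₂ : Finset ι) :
    ∑ i, regionWeight R₁ i * regionWeight R₂ i = #(R₁ ∩ R₂) / √(#R₁ * #R₂ : ℝ) := by
  rw [sum_regionWeight_mul]
  simp only [regionWeight, sum_ite_mem, sum_const, nsmul_eq_mul]
  rw [sqrt_mul (Nat.cast_nonneg _)]
  field_simp

lemma sum_sub_regionWeight_sq {R₁ R₂ : Finset ι} (h₁ : R₁.Nonempty) (h₂ : R₂.Nonempty) :
    ∑ i, (regionWeight R₁ i - regionWeight R₂ i) ^ 2
      = 2 * (1 - #(R₁ ∩ R₂) / √(#R₁ * #R₂ : ℝ)) := by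
  have hself : ∀ R : Finset ι, R.Nonempty → ∑ i, regionWeight R i * regionWeight R i = 1 :=
    fun R h => by
      rw [sum_regionWeight_mul_regionWeight, inter_self, sqrt_mul_self (Nat.cast_nonneg _),
        div_self (by simpa using h.ne_empty)]
  have hexpand : ∀ a b : ℝ, (a - b) ^ 2 = a * a + b * b - 2 * (a * b) := fun a b => by ring
  simp only [hexpand, sum_sub_distrib, sum_add_distrib, ← mul_sum, hself R₁ h₁, hself R₂ h₂,
    sum_regionWeight_mul_regionWeight]
  ring

end RegionWeight

theorem region_statistic_difference_tail_general
    {ι : Type*} [Fintype ι] [DecidableEq ι]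
    {Ω : Type*} [MeasurableSpace Ω] (μ : Measure Ω)
    (Y : ι → Ω → ℝ) (hmeas : ∀ i, Measurable (Y i))
    (hindep : iIndepFun Y μ)
    (hdist : ∀ i, μ.map (Y i) = gaussianReal 0 1)
    (R₁ R₂ : Finset ι) (h₁ : R₁.Nonempty) (h₂ : R₂.Nonempty)
    (t : ℝ) (ht : 0 ≤ t) :
    μ {ω | 2 * Real.sqrt (2 * (1 - ((R₁ ∩ R₂).card : ℝ)
              / Real.sqrt ((R₁.card : ℝ) * (R₂.card : ℝ)))) * t
          + 2 * t ^ 2 / Real.sqrt (min (R₁.card : ℝ) (R₂.card : ℝ))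
        < |(∑ i ∈ R₁, ((Y i ω) ^ 2 - 1)) / Real.sqrt (R₁.card : ℝ)
            - (∑ i ∈ R₂, ((Y i ω) ^ 2 - 1)) / Real.sqrt (R₂.card : ℝ)|}
      ≤ ENNReal.ofReal (2 * Real.exp (-t ^ 2)) := by
  have hL : ∀ ω, ∑ i, (regionWeight R₁ i - regionWeight R₂ i) * (Y i ω ^ 2 - 1)
      = (∑ i ∈ R₁, (Y i ω ^ 2 - 1)) / √(#R₁ : ℝ) - (∑ i ∈ R₂, (Y i ω ^ 2 - 1)) / √(#R₂ : ℝ) :=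
    fun ω => by simp only [sub_mul, sum_sub_distrib, sum_regionWeight_mul]
  have h := measure_lt_abs_sum_mul_sq_sub_one_le hmeas hindep hdist _ (by positivity)
    (abs_sub_regionWeight_le h₁ h₂) ht
  simp only [hL, sum_sub_regionWeight_sq h₁ h₂] at h
  convert h using 5
  ring

/-- Tail bound for the difference of two normalized region statistics
`L_R = (∑ i ∈ R, (Y i ^ 2 - 1))/√|R|` built from i.i.d. standard Gaussians: for `t ≥ 0`,
`P(|L_{R₁} - L_{R₂}| > 2√(2 d(R₁,R₂)) t + 2t²/√(min |R₁| |R₂|)) ≤ 2 exp (-t²)`,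
where `d(R₁,R₂) = 1 - |R₁∩R₂|/√(|R₁||R₂|)`. -/
theorem region_statistic_difference_tail
    {ι : Type*} [Fintype ι] [DecidableEq ι]
    {Ω : Type*} [MeasurableSpace Ω] (μ : Measure Ω) [IsProbabilityMeasure μ]
    (Y : ι → Ω → ℝ) (hmeas : ∀ i, Measurable (Y i))
    (hindep : iIndepFun Y μ)
    (hdist : ∀ i, μ.map (Y i) = gaussianReal 0 1)
    (R₁ R₂ : Finset ι) (h₁ : R₁.Nonempty) (h₂ : R₂.Nonempty)
    (t : ℝ) (ht : 0 ≤ t) :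
    μ {ω | 2 * Real.sqrt (2 * (1 - ((R₁ ∩ R₂).card : ℝ)
              / Real.sqrt ((R₁.card : ℝ) * (R₂.card : ℝ)))) * t
          + 2 * t ^ 2 / Real.sqrt (min (R₁.card : ℝ) (R₂.card : ℝ))
        < |(∑ i ∈ R₁, ((Y i ω) ^ 2 - 1)) / Real.sqrt (R₁.card : ℝ)
            - (∑ i ∈ R₂, ((Y i ω) ^ 2 - 1)) / Real.sqrt (R₂.card : ℝ)|}
      ≤ ENNReal.ofReal (2 * Real.exp (-t ^ 2)) :=
  region_statistic_difference_tail_general μ Y hmeas hindep hdist R₁ R₂ h₁ h₂ t ht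
end

section
/- Let Y₁,…,Y_m be i.i.d. standard Gaussian random variables, let μ ∈ ℝ^m with δ = ∑_{i=1}^m μ_i², and define the normalized noncentral statistic L = (∑_{i=1}^m (Y_i + μ_i)² − m)/√m. Let N be an integer with N ≥ m ≥ 1, and let q ≥ 0 and K > 0 be real numbers. If the signal strength satisfies δ/√m ≥ 2√(log(N/m)) + q + K·√(2 + 4δ/m), then P( L − 2√(log(N/m)) > q ) ≥ 1 − 1/K². -/
/-!
`∑ i, (Y i + μ i)²` is a noncentral χ² variable with mean `m + δ` and variance `2m + 4δ`; the
variance comes from the fourth moment `μ⁴ + 6μ²v + 3v²` of `N(μ, v)`, read off the derivatives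
of its moment generating function `exp (μ t + v t² / 2)`. Multiplied by `√m`, the signal condition
says that the threshold lies `K` standard deviations below the mean of the sum, so Chebyshev's
inequality bounds the probability of falling below it by `1 / K²`.
-/

open MeasureTheory ProbabilityTheory Real
open scoped NNReal

namespace ProbabilityTheory

section GaussianMoments

open Polynomial

noncomputable def gaussianMomentPoly (b : ℝ) : ℕ → ℝ[X]
  | 0 => 1
  | n + 1 => C b * derivative (gaussianMomentPoly b n) + X * gaussianMomentPoly b n

lemma iteratedDeriv_exp_quadratic (a b : ℝ) (n : ℕ) :
    iteratedDeriv n (fun t ↦ rexp (a * t + b * t ^ 2 / 2)) =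
      fun t ↦ (gaussianMomentPoly b n).eval (a + b * t) * rexp (a * t + b * t ^ 2 / 2) := by
  induction n with
  | zero => simp [gaussianMomentPoly]
  | succ n ih =>
    rw [iteratedDeriv_succ, ih]
    funext t
    have hlin : HasDerivAt (fun t ↦ a + b * t) b t := by
      simpa using ((hasDerivAt_id' t).const_mul b).const_add a
    have hexponent : HasDerivAt (fun t ↦ a * t + b * t ^ 2 / 2) (a + b * t) t :=
      (((hasDerivAt_id' t).const_mul a).fun_add
        (((hasDerivAt_pow 2 t).const_mul b).div_const 2)).congr_deriv (by norm_num; ring)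
    refine ((((gaussianMomentPoly b n).hasDerivAt (a + b * t)).comp t hlin).mul
      hexponent.exp).deriv.trans ?_
    simp only [Function.comp_apply, gaussianMomentPoly, eval_add, eval_mul, eval_C, eval_X]
    ring

lemma integral_pow_gaussianReal (μ : ℝ) (v : ℝ≥0) (n : ℕ) :
    ∫ x, x ^ n ∂gaussianReal μ v = (gaussianMomentPoly v n).eval μ := by
  have h := iteratedDeriv_mgf_zero (X := id) (μ := gaussianReal μ v)
    (by simp [integrableExpSet_id_gaussianReal]) n
  rw [mgf_id_gaussianReal, iteratedDeriv_exp_quadratic] at h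
  simpa using h.symm

lemma integral_sq_gaussianReal (μ : ℝ) (v : ℝ≥0) :
    ∫ x, x ^ 2 ∂gaussianReal μ v = μ ^ 2 + v := by
  rw [integral_pow_gaussianReal]
  simp only [gaussianMomentPoly, derivative_add, derivative_mul, derivative_C, derivative_X,
    derivative_one, derivative_zero, eval_add, eval_mul, eval_C, eval_X, eval_one, eval_zero]
  ring

lemma integral_pow_four_gaussianReal (μ : ℝ) (v : ℝ≥0) :
    ∫ x, x ^ 4 ∂gaussianReal μ v = μ ^ 4 + 6 * μ ^ 2 * v + 3 * v ^ 2 := by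
  rw [integral_pow_gaussianReal]
  simp only [gaussianMomentPoly, derivative_add, derivative_mul, derivative_C, derivative_X,
    derivative_one, derivative_zero, eval_add, eval_mul, eval_C, eval_X, eval_one, eval_zero]
  ring

lemma memLp_sq_gaussianReal (μ : ℝ) (v : ℝ≥0) :
    MemLp (fun x ↦ x ^ 2) 2 (gaussianReal μ v) := by
  refine (memLp_two_iff_integrable_sq (by fun_prop)).2 ?_
  have h4 := (memLp_id_gaussianReal (μ := μ) (v := v) 4).integrable_norm_pow (p := 4) (by norm_num)
  simpa [← pow_mul, Even.pow_abs (by decide : Even 4)] using h4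

lemma variance_sq_gaussianReal (μ : ℝ) (v : ℝ≥0) :
    Var[fun x ↦ x ^ 2; gaussianReal μ v] = 2 * v ^ 2 + 4 * μ ^ 2 * v := by
  rw [variance_eq_sub (memLp_sq_gaussianReal μ v)]
  simp only [Pi.pow_apply, ← pow_mul]
  rw [integral_pow_four_gaussianReal, integral_sq_gaussianReal]
  ring

end GaussianMoments

section HasLaw

variable {Ω : Type*} {mΩ : MeasurableSpace Ω} {P : Measure Ω} {X : Ω → ℝ} {μ : ℝ} {v : ℝ≥0}

lemma integral_sq_of_hasLaw_gaussianReal (hX : HasLaw X (gaussianReal μ v) P) :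
    P[fun ω ↦ X ω ^ 2] = μ ^ 2 + v := by
  rw [← integral_sq_gaussianReal]
  exact hX.integral_comp (f := fun x ↦ x ^ 2) (by fun_prop)

lemma memLp_sq_of_hasLaw_gaussianReal (hX : HasLaw X (gaussianReal μ v) P) :
    MemLp (fun ω ↦ X ω ^ 2) 2 P := by
  have h := memLp_sq_gaussianReal μ v
  rw [← hX.map_eq] at h
  exact (memLp_map_measure_iff (by fun_prop) hX.aemeasurable).1 h

lemma variance_sq_of_hasLaw_gaussianReal (hX : HasLaw X (gaussianReal μ v) P) :
    Var[fun ω ↦ X ω ^ 2; P] = 2 * v ^ 2 + 4 * μ ^ 2 * v := by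
  rw [← variance_sq_gaussianReal, ← hX.map_eq, variance_map (by fun_prop) hX.aemeasurable]
  rfl

end HasLaw

section NoncentralChiSquared

variable {Ω ι : Type*} {mΩ : MeasurableSpace Ω} {P : Measure Ω} [Fintype ι]
  {Z : ι → Ω → ℝ} {a : ι → ℝ}

lemma memLp_sum_sq_of_hasLaw_gaussianReal (hZ : ∀ i, HasLaw (Z i) (gaussianReal (a i) 1) P) :
    MemLp (fun ω ↦ ∑ i, Z i ω ^ 2) 2 P :=
  memLp_finsetSum _ fun i _ ↦ memLp_sq_of_hasLaw_gaussianReal (hZ i)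

lemma integral_sum_sq_of_hasLaw_gaussianReal [IsFiniteMeasure P]
    (hZ : ∀ i, HasLaw (Z i) (gaussianReal (a i) 1) P) :
    P[fun ω ↦ ∑ i, Z i ω ^ 2] = Fintype.card ι + ∑ i, a i ^ 2 := by
  rw [integral_finsetSum _ fun i _ ↦
    (memLp_sq_of_hasLaw_gaussianReal (hZ i)).integrable one_le_two]
  simp [integral_sq_of_hasLaw_gaussianReal (hZ _), Finset.sum_add_distrib, add_comm]

lemma variance_sum_sq_of_hasLaw_gaussianReal (hZ : ∀ i, HasLaw (Z i) (gaussianReal (a i) 1) P)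
    (hindep : iIndepFun Z P) :
    Var[fun ω ↦ ∑ i, Z i ω ^ 2; P] = 2 * Fintype.card ι + 4 * ∑ i, a i ^ 2 := by
  have hpairwise : Set.Pairwise (Finset.univ : Finset ι) fun i j ↦
      (fun ω ↦ Z i ω ^ 2) ⟂ᵢ[P] (fun ω ↦ Z j ω ^ 2) := fun i _ j _ hij ↦
    (hindep.indepFun hij).comp (measurable_id.pow_const 2) (measurable_id.pow_const 2)
  rw [← Finset.sum_fn,
    IndepFun.variance_sum (fun i _ ↦ memLp_sq_of_hasLaw_gaussianReal (hZ i)) hpairwise]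
  simp [variance_sq_of_hasLaw_gaussianReal (hZ _), Finset.sum_add_distrib, Finset.mul_sum,
    mul_comm]

end NoncentralChiSquared

lemma ofReal_one_sub_inv_sq_le_meas_lt {Ω : Type*} {mΩ : MeasurableSpace Ω} {P : Measure Ω}
    [IsProbabilityMeasure P] {X : Ω → ℝ} (hX : MemLp X 2 P) (hV : 0 < Var[X; P]) {t K : ℝ}
    (hK : 0 < K) (ht : t + K * √Var[X; P] ≤ P[X]) :
    ENNReal.ofReal (1 - 1 / K ^ 2) ≤ P {ω | t < X ω} := by
  set r := K * √Var[X; P]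
  have hr : 0 < r := by positivity
  have hratio : Var[X; P] / r ^ 2 = 1 / K ^ 2 := by
    rw [mul_pow, Real.sq_sqrt hV.le]
    field_simp
  have hcover : Set.univ ⊆ {ω | r ≤ |X ω - P[X]|} ∪ {ω | t < X ω} := by
    intro ω _
    by_contra! h
    simp only [Set.mem_union, Set.mem_ofPred_eq, not_or, not_le, not_lt] at h
    linarith [(abs_lt.1 h.1).1]
  calc ENNReal.ofReal (1 - 1 / K ^ 2)
      = 1 - ENNReal.ofReal (1 / K ^ 2) := by
        rw [ENNReal.ofReal_sub _ (by positivity), ENNReal.ofReal_one]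
    _ ≤ 1 - P {ω | r ≤ |X ω - P[X]|} := by
        rw [← hratio]
        exact tsub_le_tsub_left (meas_ge_le_variance_div_sq hX hr) 1
    _ ≤ P {ω | t < X ω} := by
        rw [tsub_le_iff_left, ← measure_univ (μ := P)]
        exact (measure_mono hcover).trans (measure_union_le _ _)

end ProbabilityTheory

theorem noncentral_scan_power_general
    {Ω : Type*} [MeasurableSpace Ω] (μ : Measure Ω) [IsProbabilityMeasure μ]
    {m N : ℕ} (hm : 1 ≤ m)
    (Y : Fin m → Ω → ℝ) (hmeas : ∀ i, Measurable (Y i))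
    (hindep : iIndepFun Y μ)
    (hdist : ∀ i, μ.map (Y i) = gaussianReal 0 1)
    (μv : Fin m → ℝ) (q K : ℝ) (hK : 0 < K)
    (hsig : 2 * Real.sqrt (Real.log ((N : ℝ) / m)) + q
          + K * Real.sqrt (2 + 4 * (∑ i, (μv i) ^ 2) / m)
        ≤ (∑ i, (μv i) ^ 2) / Real.sqrt m) :
    ENNReal.ofReal (1 - 1 / K ^ 2)
      ≤ μ {ω | q < ((∑ i, (Y i ω + μv i) ^ 2) - m) / Real.sqrt m
            - 2 * Real.sqrt (Real.log ((N : ℝ) / m))} := by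
  set δ := ∑ i, μv i ^ 2
  set c := 2 * √(Real.log ((N : ℝ) / m))
  have hZ (i : Fin m) : HasLaw (fun ω ↦ Y i ω + μv i) (gaussianReal (μv i) 1) μ := by
    simpa using gaussianReal_add_const ⟨(hmeas i).aemeasurable, hdist i⟩ (μv i)
  have hindepZ : iIndepFun (fun i ω ↦ Y i ω + μv i) μ :=
    hindep.comp (fun i x ↦ x + μv i) fun i ↦ measurable_add_const _
  have hmean := integral_sum_sq_of_hasLaw_gaussianReal hZ
  have hvar := variance_sum_sq_of_hasLaw_gaussianReal hZ hindepZ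
  rw [Fintype.card_fin] at hmean hvar
  have hm0 : (0 : ℝ) < m := by exact_mod_cast hm
  have hthreshold : m + √m * (q + c) + K * √(2 * m + 4 * δ) ≤ m + δ := by
    have hsqrt : √(2 * m + 4 * δ) = √m * √(2 + 4 * δ / m) := by
      rw [← Real.sqrt_mul hm0.le]
      field_simp
    rw [le_div_iff₀ (by positivity)] at hsig
    rw [hsqrt]
    linarith
  refine (ofReal_one_sub_inv_sq_le_meas_lt (memLp_sum_sq_of_hasLaw_gaussianReal hZ)
    (by rw [hvar]; positivity) hK (by rwa [hvar, hmean])).trans (measure_mono fun ω hω ↦ ?_)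
  simp only [Set.mem_ofPred_eq] at hω ⊢
  rw [lt_sub_iff_add_lt, lt_div_iff₀ (by positivity)]
  linarith

/-- Power of the size-corrected scan statistic at a signal region:
if the signal strength satisfies
`δ/√m ≥ 2√(log(N/m)) + q + K √(2 + 4δ/m)`, then
`P(L - 2√(log(N/m)) > q) ≥ 1 - 1/K²`, where
`L = (∑ i, (Y i + μ i)² - m)/√m` and `δ = ∑ i, (μ i)²`. -/
theorem noncentral_scan_power
    {Ω : Type*} [MeasurableSpace Ω] (μ : Measure Ω) [IsProbabilityMeasure μ]
    {m N : ℕ} (hm : 1 ≤ m) (hmN : m ≤ N)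
    (Y : Fin m → Ω → ℝ) (hmeas : ∀ i, Measurable (Y i))
    (hindep : iIndepFun Y μ)
    (hdist : ∀ i, μ.map (Y i) = gaussianReal 0 1)
    (μv : Fin m → ℝ) (q K : ℝ) (hq : 0 ≤ q) (hK : 0 < K)
    (hsig : 2 * Real.sqrt (Real.log ((N : ℝ) / m)) + q
          + K * Real.sqrt (2 + 4 * (∑ i, (μv i) ^ 2) / m)
        ≤ (∑ i, (μv i) ^ 2) / Real.sqrt m) :
    ENNReal.ofReal (1 - 1 / K ^ 2)
      ≤ μ {ω | q < ((∑ i, (Y i ω + μv i) ^ 2) - m) / Real.sqrt m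
            - 2 * Real.sqrt (Real.log ((N : ℝ) / m))} :=
  noncentral_scan_power_general μ hm Y hmeas hindep hdist μv q K hK hsig
end
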